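/- Let X1,...,XN be real numbers, p = (p1,...,pN) and q = (q1,...,qN) points of the standard simplex Δ^{N-1} = {p ∈ [0,1]^N : p1+...+pN = 1}, and define z(p) ∈ ℝ^N by z(p)_i = p_i * (X_i - p·X), where p·X = Σ p_j X_j. Then ‖z(p) - z(q)‖ ≤ 3 ‖X‖ ‖p - q‖, where ‖·‖ denotes the Euclidean norm. -/

import Mathlib

/-!
Writing `z(p) - z(q) = (p - q) ⊙ X - ⟪p, X⟫ (p - q) - ⟪p - q, X⟫ q`, each of the three terms is at
most `‖X‖ ‖p - q‖`: the first since `|X i| ≤ ‖X‖`, the other two by Cauchy–Schwarz, as points of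
the simplex have Euclidean norm at most `1`.
-/

open scoped BigOperators

/-- The vector `z(p)` with `z(p)_i = p_i (X_i - p·X)`. -/
noncomputable def zVec (N : ℕ) (X p : EuclideanSpace ℝ (Fin N)) : EuclideanSpace ℝ (Fin N) :=
  (WithLp.equiv 2 ((i : Fin N) → ℝ)).symm fun i => p i * (X i - ∑ j, p j * X j)

open RealInnerProductSpace

namespace EuclideanSpace

variable {ι : Type*} [Fintype ι]

theorem norm_le_one_of_nonneg_of_sum_eq_one {p : EuclideanSpace ℝ ι}
    (hp0 : ∀ i, 0 ≤ p i) (hp1 : ∑ i, p i = 1) : ‖p‖ ≤ 1 := by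
  have hle : ∀ i, p i ≤ 1 := fun i =>
    hp1 ▸ Finset.single_le_sum (fun j _ => hp0 j) (Finset.mem_univ i)
  have hsq : ‖p‖ ^ 2 ≤ 1 := by
    rw [real_norm_sq_eq, ← hp1]
    exact Finset.sum_le_sum fun i _ => by nlinarith [hp0 i, hle i]
  exact (pow_le_one_iff_of_nonneg (norm_nonneg p) two_ne_zero).1 hsq

theorem norm_toLp_mul_le (a b : EuclideanSpace ℝ ι) :
    ‖(WithLp.toLp 2 fun i => a i * b i : EuclideanSpace ℝ ι)‖ ≤ ‖a‖ * ‖b‖ := by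
  refine (pow_le_pow_iff_left₀ (norm_nonneg _) (by positivity) two_ne_zero).1 ?_
  rw [mul_pow, real_norm_sq_eq, real_norm_sq_eq b, Finset.mul_sum]
  refine Finset.sum_le_sum fun i _ => ?_
  have hai : a i ^ 2 ≤ ‖a‖ ^ 2 := by
    simpa using sq_le_sq.2 (by simpa using PiLp.norm_apply_le a i)
  simpa [mul_pow] using mul_le_mul_of_nonneg_right hai (sq_nonneg (b i))

end EuclideanSpace

theorem zVec_sub_zVec (N : ℕ) (X p q : EuclideanSpace ℝ (Fin N)) :
    zVec N X p - zVec N X q =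
      (WithLp.toLp 2 fun i => (p - q) i * X i) - ⟪p, X⟫ • (p - q) - ⟪p - q, X⟫ • q := by
  ext i
  simp only [zVec, WithLp.equiv_symm_apply, PiLp.sub_apply, PiLp.smul_apply, smul_eq_mul,
    PiLp.inner_apply, RCLike.inner_apply, Real.ringHom_apply, mul_comm, mul_sub,
    Finset.sum_sub_distrib]
  ring

theorem norm_zVec_sub_zVec_le (N : ℕ) (X p q : EuclideanSpace ℝ (Fin N)) :
    ‖zVec N X p - zVec N X q‖ ≤ (1 + ‖p‖ + ‖q‖) * ‖X‖ * ‖p - q‖ := by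
  rw [zVec_sub_zVec]
  have hA := EuclideanSpace.norm_toLp_mul_le (p - q) X
  have hB : ‖⟪p, X⟫ • (p - q)‖ ≤ ‖p‖ * ‖X‖ * ‖p - q‖ := by
    rw [norm_smul]; gcongr; exact norm_inner_le_norm p X
  have hC : ‖⟪p - q, X⟫ • q‖ ≤ ‖p - q‖ * ‖X‖ * ‖q‖ := by
    rw [norm_smul]; gcongr; exact norm_inner_le_norm (p - q) X
  calc _ ≤ ‖(WithLp.toLp 2 fun i => (p - q) i * X i : EuclideanSpace ℝ (Fin N))‖
          + ‖⟪p, X⟫ • (p - q)‖ + ‖⟪p - q, X⟫ • q‖ :=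
        (norm_sub_le _ _).trans (add_le_add_left (norm_sub_le _ _) _)
    _ ≤ _ := by linarith

/-- Lipschitz estimate: for `p, q` in the simplex,
`‖z(p) - z(q)‖ ≤ 3 ‖X‖ ‖p - q‖` (Euclidean norms). -/
theorem stmt8 (N : ℕ) (X p q : EuclideanSpace ℝ (Fin N))
    (hp0 : ∀ i, 0 ≤ p i) (hp1 : ∑ i, p i = 1)
    (hq0 : ∀ i, 0 ≤ q i) (hq1 : ∑ i, q i = 1) :
    ‖zVec N X p - zVec N X q‖ ≤ 3 * ‖X‖ * ‖p - q‖ := by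
  have hp := EuclideanSpace.norm_le_one_of_nonneg_of_sum_eq_one hp0 hp1
  have hq := EuclideanSpace.norm_le_one_of_nonneg_of_sum_eq_one hq0 hq1
  calc ‖zVec N X p - zVec N X q‖ ≤ (1 + ‖p‖ + ‖q‖) * ‖X‖ * ‖p - q‖ :=
        norm_zVec_sub_zVec_le N X p q
    _ ≤ 3 * ‖X‖ * ‖p - q‖ := by gcongr; linarith
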